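/- Let a ∈ ℂ, let I > 0 be real, and set T = |a|² + I. With u* = conj(a)/T and ρ* = T/I, one has (log ρ* − ρ*·(|u*|²·T − 2·Re(u*·a) + 1) + 1)/log 2 = log₂(1 + |a|²/I). Consequently the supremum over u ∈ ℂ and ρ > 0 of (log ρ − ρ·(|u|²T − 2Re(u a) + 1) + 1)/log 2 is attained and equals log₂(1 + |a|²/I). -/

import Mathlib

/-!
Completing the square, `T · e(u) - I = ‖T u - conj a‖² ≥ 0`, so the MSE `e(u)` of a receiver is
minimised by `u* = conj a / T` with value `I / T`. For fixed `e > 0` the concave function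
`ρ ↦ log ρ - ρ e + 1` is maximised at `ρ = 1 / e` with value `-log e` (this is `log x ≤ x - 1`),
and `-log (I / T) = log (1 + |a|² / I)`.
-/

open Real ComplexConjugate

noncomputable def mse (u a : ℂ) (T : ℝ) : ℝ := ‖u‖ ^ 2 * T - 2 * (u * a).re + 1

lemma mse_conj_div (a : ℂ) {T : ℝ} (hT : T ≠ 0) :
    mse (conj a / T) a T = 1 - ‖a‖ ^ 2 / T := by
  have hre : (conj a / T * a).re = ‖a‖ ^ 2 / T := by
    rw [div_mul_eq_mul_div, Complex.conj_mul', ← Complex.ofReal_pow, ← Complex.ofReal_div,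
      Complex.ofReal_re]
  rw [mse, hre, norm_div, RCLike.norm_conj, Complex.norm_real, Real.norm_eq_abs, div_pow, sq_abs]
  field_simp
  ring

lemma one_sub_div_le_mse (u a : ℂ) {T : ℝ} (hT : 0 < T) : 1 - ‖a‖ ^ 2 / T ≤ mse u a T := by
  have hre : (u * a).re ≤ ‖u‖ * ‖a‖ := (Complex.re_le_norm _).trans (norm_mul u a).le
  rw [mse, sub_le_iff_le_add, ← sub_le_iff_le_add', le_div_iff₀ hT]
  nlinarith [sq_nonneg (‖u‖ * T - ‖a‖)]

lemma log_sub_mul_add_one_le_neg_log {ρ e : ℝ} (hρ : 0 < ρ) (he : 0 < e) :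
    log ρ - ρ * e + 1 ≤ -log e := by
  have := log_le_sub_one_of_pos (mul_pos hρ he)
  rw [log_mul hρ.ne' he.ne'] at this
  linarith

lemma log_inv_sub_inv_mul_add_one {e : ℝ} (he : e ≠ 0) : log e⁻¹ - e⁻¹ * e + 1 = -log e := by
  rw [log_inv, inv_mul_cancel₀ he]
  ring

/-- Attainment half of the rate–WMMSE relationship: with `T = |a|² + I`, the
MMSE receiver `u* = conj a / T` and optimal weight `ρ* = T/I` achieve the rate
`log₂(1 + |a|²/I)`, hence the supremum over `u ∈ ℂ`, `ρ > 0` of the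
weighted-MSE surrogate is attained and equals `log₂(1 + |a|²/I)`. -/
theorem rate_wmmse_attained (a : ℂ) (I : ℝ) (hI : 0 < I) (T : ℝ)
    (hT : T = ‖a‖ ^ 2 + I) :
    (Real.log (T / I) -
        (T / I) * (‖(starRingEnd ℂ) a / (T : ℂ)‖ ^ 2 * T -
          2 * ((starRingEnd ℂ) a / (T : ℂ) * a).re + 1) + 1) / Real.log 2 =
      Real.logb 2 (1 + ‖a‖ ^ 2 / I) ∧
    IsGreatest
      {y : ℝ | ∃ u : ℂ, ∃ ρ : ℝ, 0 < ρ ∧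
        y = (Real.log ρ - ρ * (‖u‖ ^ 2 * T - 2 * (u * a).re + 1) + 1) / Real.log 2}
      (Real.logb 2 (1 + ‖a‖ ^ 2 / I)) := by
  have hT0 : 0 < T := by rw [hT]; positivity
  have hmmse : 1 - ‖a‖ ^ 2 / T = I / T := by field_simp; linarith
  have hrate : logb 2 (1 + ‖a‖ ^ 2 / I) = -log (I / T) / log 2 := by
    rw [logb, ← log_inv, inv_div, hT, add_div, div_self hI.ne', add_comm]
  have hattained : (log (T / I) - T / I * mse (conj a / T) a T + 1) / log 2 =
      logb 2 (1 + ‖a‖ ^ 2 / I) := by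
    rw [mse_conj_div a hT0.ne', hmmse, ← inv_div I T,
      log_inv_sub_inv_mul_add_one (div_pos hI hT0).ne', hrate]
  refine ⟨hattained, ⟨conj a / T, T / I, div_pos hT0 hI, hattained.symm⟩, ?_⟩
  rintro _ ⟨u, ρ, hρ, rfl⟩
  rw [hrate]
  gcongr
  calc log ρ - ρ * mse u a T + 1 ≤ log ρ - ρ * (I / T) + 1 := by
        gcongr
        exact hmmse ▸ one_sub_div_le_mse u a hT0
    _ ≤ -log (I / T) := log_sub_mul_add_one_le_neg_log hρ (div_pos hI hT0)
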